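/- arXiv:1611.06775 — 4 statements merged into one kernel-verified Lean document; each statement's English description precedes it below -/
import Mathlib

section
/- A matrix X ∈ Mat_n(ℂ) is nilpotent if and only if det(I_n + t·X) = 1 as a polynomial in the variable t. -/
open Polynomial

lemma reflect_reflect_of_natDegree_le {R : Type*} [Semiring R] (N : ℕ) (p : R[X])
    (h : p.natDegree ≤ N) : Polynomial.reflect N (Polynomial.reflect N p) = p := by
  ext i
  rw [coeff_reflect, coeff_reflect, revAt_invol]

lemma charpoly_eq_X_pow_of_charpolyRev_eq_one {n : ℕ}
    (M : Matrix (Fin n) (Fin n) ℂ) (h : M.charpolyRev = 1) :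
    M.charpoly = Polynomial.X ^ n := by
  have hdeg : M.charpoly.natDegree = n := by
    simpa using M.charpoly_natDegree_eq_dim
  have h1 : M.charpoly.reverse = 1 := by rw [M.reverse_charpoly, h]
  have := congrArg (Polynomial.reflect n) h1
  rwa [Polynomial.reverse, hdeg, reflect_reflect_of_natDegree_le n _ hdeg.le,
    reflect_one] at this

/-- A matrix `X ∈ Mat_n(ℂ)` is nilpotent iff `det(I + t • X) = 1` in `ℂ[t]`. -/
theorem nilpotent_iff_det_one_add_smul (n : ℕ) (X : Matrix (Fin n) (Fin n) ℂ) :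
    IsNilpotent X ↔
      Matrix.det ((1 : Matrix (Fin n) (Fin n) (Polynomial ℂ)) +
        (Polynomial.X : Polynomial ℂ) • X.map Polynomial.C) = 1 := by
  have key : Matrix.det ((1 : Matrix (Fin n) (Fin n) (Polynomial ℂ)) +
      (Polynomial.X : Polynomial ℂ) • X.map Polynomial.C) = (-X).charpolyRev := by
    rw [Matrix.charpolyRev]
    congr 1
    have : (-X).map Polynomial.C = -(X.map Polynomial.C) := by
      ext i j; simp
    rw [this, smul_neg, sub_neg_eq_add]
  rw [key]
  constructor
  · intro hX
    have hX' : IsNilpotent (-X) := hX.neg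
    have h1 : IsNilpotent ((-X).charpoly - Polynomial.X ^ (Fintype.card (Fin n))) :=
      Matrix.isNilpotent_charpoly_sub_pow_of_isNilpotent hX'
    have h2 : (-X).charpoly = Polynomial.X ^ n := by
      have := h1.eq_zero
      rw [sub_eq_zero] at this
      simpa using this
    rw [← Matrix.reverse_charpoly, h2]
    rw [← mul_one ((Polynomial.X : Polynomial ℂ) ^ n), Polynomial.reverse_X_pow_mul]; simp [Polynomial.reverse]
  · intro h
    have h2 : (-X).charpoly = Polynomial.X ^ n :=
      charpoly_eq_X_pow_of_charpolyRev_eq_one _ h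
    have h3 : (-X) ^ n = 0 := by
      have := (-X).aeval_self_charpoly
      rwa [h2, map_pow, Polynomial.aeval_X] at this
    have : IsNilpotent (-X) := ⟨n, h3⟩
    simpa using this.neg
end

section
/- For any n×n matrix X over a commutative ring, the coefficient of t^p in det(I_n + t·X) equals the sum of all principal p×p minors of X. -/
/-- For an `n × n` matrix `X` over a commutative ring, the coefficient of `t^p` in
`det(I + t • X)` is the sum of all principal `p × p` minors of `X`. -/
theorem coeff_det_one_add_smul_eq_sum_principal_minors
    (R : Type*) [CommRing R] (n p : ℕ) (X : Matrix (Fin n) (Fin n) R) :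
    (Matrix.det ((1 : Matrix (Fin n) (Fin n) (Polynomial R)) +
        (Polynomial.X : Polynomial R) • X.map Polynomial.C)).coeff p =
      ∑ S ∈ Finset.powersetCard p (Finset.univ : Finset (Fin n)),
        Matrix.det (X.submatrix (fun i : {x // x ∈ S} => (i : Fin n))
          (fun i : {x // x ∈ S} => (i : Fin n))) :=
  Matrix.coeff_det_one_add_X_smul_eq_sum_minors X p
end

section
/- Let λ be a dominant coweight of SL_n with 0 < λ ≤ n·ϖ_1, write λ = Σ λ_j ϖ_{j*} = Σ m_i α_{i*}, let v be the partition 1^{λ_{n-1}} 2^{λ_{n-2}} ⋯ (n-1)^{λ_1} of n, and let u = v^T be the conjugate partition with parts u_1 ≥ u_2 ≥ ⋯. Then for all 1 ≤ i ≤ n−1, m_{n-i} = u_1 + u_2 + ⋯ + u_i − i. -/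
/-! The functionals `w ↦ w₀ + ⋯ + w_{k-1}` (`1 ≤ k < n`) form the basis dual to the simple coroots
`α_k`, and take the value `min k p - k p / n` on `ϖ_p`. Write `a p = λ_{n-p}` for the number of
parts of `v` equal to `p`, so that `|v| = ∑ p a p` and `u₁ + ⋯ + u_k = ∑ min k p · a p`.
Applying the `k`-th functional to `λ = ∑ m_i α_{i*}` gives `m_{n-k} = u₁ + ⋯ + u_k - k |v| / n`.
Applying the `(n-1)`-st one to `n ϖ₁ - λ`, a nonnegative integral combination of coroots, shows
`1 - |v| / n ∈ ℕ`; as `λ ≠ 0` makes `|v|` positive, `|v| = n`. -/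

/-- The `i`-th fundamental coweight `ϖ_i` of `SL_n`, as a vector in `ℚ^n`. -/
def varpi (n i : ℕ) : Fin n → ℚ :=
  fun j => if (j : ℕ) < i then 1 - (i : ℚ) / n else -((i : ℚ) / n)

/-- The `j`-th simple coroot `α_j = e_j - e_{j+1}` of `SL_n` (1-based `j`). -/
def alphaC (n j : ℕ) : Fin n → ℚ :=
  fun x => (if (x : ℕ) = j - 1 then 1 else 0) - (if (x : ℕ) = j then 1 else 0)

open Finset

section PartialSum

variable {n k : ℕ}

def partialSum (hk : k ≤ n) : (Fin n → ℚ) →ₗ[ℚ] ℚ where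
  toFun w := ∑ x : Fin k, w (Fin.castLE hk x)
  map_add' _ _ := sum_add_distrib
  map_smul' _ _ := by simp [mul_sum]

lemma partialSum_apply (hk : k ≤ n) (g : ℕ → ℚ) :
    partialSum hk (fun x => g x) = ∑ x ∈ range k, g x :=
  Fin.sum_univ_eq_sum_range g k

lemma partialSum_varpi (hk : k ≤ n) (p : ℕ) :
    partialSum hk (varpi n p) = (min k p : ℕ) - k * p / n := by
  have hfilter : (range k).filter (· < p) = range (min k p) := by
    ext x; simp only [mem_filter, mem_range]; omega
  have hsplit (x : ℕ) : (if x < p then 1 - (p : ℚ) / n else -((p : ℚ) / n)) =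
      (if x < p then 1 else 0) - p / n := by
    split_ifs <;> ring
  refine (partialSum_apply hk fun x => if x < p then 1 - (p : ℚ) / n else -((p : ℚ) / n)).trans ?_
  simp only [hsplit, sum_sub_distrib, sum_boole, hfilter, card_range, sum_const, nsmul_eq_mul]
  ring

lemma partialSum_alphaC (hk : k ≤ n) {j : ℕ} (hj : 1 ≤ j) :
    partialSum hk (alphaC n j) = if j = k then 1 else 0 := by
  refine (partialSum_apply hk fun x => (if x = j - 1 then 1 else 0) - if x = j then 1 else 0).trans ?_
  simp only [sum_sub_distrib, sum_ite_eq', mem_range]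
  split_ifs <;> first | omega | norm_num

lemma partialSum_sum_varpi (hk : k ≤ n) (s : Finset ℕ) (a : ℕ → ℚ) :
    partialSum hk (∑ p ∈ s, a p • varpi n p) =
      ∑ p ∈ s, (min k p : ℕ) * a p - k * (∑ p ∈ s, p * a p) / n := by
  simp only [map_sum, map_smul, partialSum_varpi, smul_eq_mul, mul_sum, sum_div,
    ← sum_sub_distrib]
  exact sum_congr rfl fun p _ => by ring

lemma partialSum_sum_alphaC (hk₁ : 1 ≤ k) (hk : k < n) (c : ℕ → ℚ) :
    partialSum hk.le (∑ j ∈ Icc 1 (n - 1), c j • alphaC n j) = c k := by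
  have hmem : k ∈ Icc 1 (n - 1) := mem_Icc.2 ⟨hk₁, by omega⟩
  simp only [map_sum, map_smul, smul_eq_mul]
  rw [sum_congr rfl fun j hj => by rw [partialSum_alphaC hk.le (mem_Icc.1 hj).1]]
  simp [hmem]

end PartialSum

lemma sum_Icc_reflect {M : Type*} [AddCommMonoid M] (n : ℕ) (f : ℕ → ℕ → M) :
    ∑ j ∈ Icc 1 (n - 1), f j (n - j) = ∑ p ∈ Icc 1 (n - 1), f (n - p) p :=
  sum_nbij' (n - ·) (n - ·) (by simp only [mem_Icc]; omega) (by simp only [mem_Icc]; omega)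
    (by simp only [mem_Icc]; omega) (by simp only [mem_Icc]; omega)
    fun j hj => by rw [Nat.sub_sub_self (by simp only [mem_Icc] at hj; omega)]

lemma sum_Icc_sum_Icc_eq_sum_min_smul {M : Type*} [AddCommMonoid M] (i N : ℕ) (f : ℕ → M) :
    ∑ r ∈ Icc 1 i, ∑ p ∈ Icc r N, f p = ∑ p ∈ Icc 1 N, min i p • f p := by
  rw [sum_comm' (t' := Icc 1 N) (s' := fun p => Icc 1 (min i p)) fun r p => by
    simp only [mem_Icc]; omega]
  simp

lemma coeff_eq_of_sum_smul_varpi_eq {n k : ℕ} {s : Finset ℕ} {a c : ℕ → ℚ}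
    (h : ∑ p ∈ s, a p • varpi n p = ∑ j ∈ Icc 1 (n - 1), c j • alphaC n j)
    (hk₁ : 1 ≤ k) (hk : k < n) :
    c k = ∑ p ∈ s, (min k p : ℕ) * a p - k * (∑ p ∈ s, p * a p) / n := by
  simpa only [partialSum_sum_varpi, partialSum_sum_alphaC hk₁ hk] using
    (congrArg (partialSum hk.le) h).symm

lemma sum_mul_eq_of_ne_zero_of_le_nsmul_varpi_one {n : ℕ} (a c : ℕ → ℕ)
    (hne : ∑ p ∈ Icc 1 (n - 1), (a p : ℚ) • varpi n p ≠ 0)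
    (hle : (n : ℚ) • varpi n 1 - ∑ p ∈ Icc 1 (n - 1), (a p : ℚ) • varpi n p =
      ∑ j ∈ Icc 1 (n - 1), (c j : ℚ) • alphaC n j) :
    ∑ p ∈ Icc 1 (n - 1), (p : ℚ) * a p = n := by
  obtain ⟨p₀, hp₀, hap₀⟩ := exists_ne_zero_of_sum_ne_zero hne
  have hn : 1 < n := by have := mem_Icc.1 hp₀; omega
  have hn_pos : (0 : ℚ) < n := Nat.cast_pos.2 (by omega)
  have hcoeff := congrArg (partialSum (Nat.sub_le n 1)) hle
  rw [map_sub, map_smul, smul_eq_mul, partialSum_varpi, partialSum_sum_varpi,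
    partialSum_sum_alphaC (by omega) (by omega), min_eq_right (by omega : 1 ≤ n - 1),
    sum_congr rfl fun p hp => by rw [min_eq_right (mem_Icc.1 hp).2]] at hcoeff
  push_cast [Nat.cast_sub hn.le] at hcoeff
  set T := ∑ p ∈ Icc 1 (n - 1), (p : ℚ) * a p
  have hT : 0 < T := by
    have ha₀ : (0 : ℚ) < a p₀ := (Nat.cast_nonneg _).lt_of_ne' (left_ne_zero_of_smul hap₀)
    have hp₀_pos : (0 : ℚ) < p₀ := Nat.cast_pos.2 (mem_Icc.1 hp₀).1
    exact sum_pos' (fun p _ => by positivity) ⟨p₀, hp₀, mul_pos hp₀_pos ha₀⟩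
  have hc : (c (n - 1) : ℚ) = 1 - T / n := by
    rw [← hcoeff]; field_simp; ring
  have hc₀ : c (n - 1) = 0 := by
    have : (c (n - 1) : ℚ) < 1 := by rw [hc]; linarith [div_pos hT hn_pos]
    exact Nat.lt_one_iff.1 (mod_cast this)
  rw [hc₀, Nat.cast_zero] at hc
  field_simp at hc
  linarith

theorem m_eq_conjugate_partial_sums_general (n : ℕ) (lam m : ℕ → ℕ)
    (hne : (∑ j ∈ Finset.Icc 1 (n - 1), (lam j : ℚ) • varpi n (n - j)) ≠ 0)
    (hle : ∃ c : ℕ → ℕ,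
      (n : ℚ) • varpi n 1 - ∑ j ∈ Finset.Icc 1 (n - 1), (lam j : ℚ) • varpi n (n - j) =
        ∑ j ∈ Finset.Icc 1 (n - 1), (c j : ℚ) • alphaC n j)
    (hm : (∑ j ∈ Finset.Icc 1 (n - 1), (lam j : ℚ) • varpi n (n - j)) =
        ∑ i ∈ Finset.Icc 1 (n - 1), (m i : ℚ) • alphaC n (n - i)) :
    ∀ i, 1 ≤ i → i ≤ n - 1 →
      m (n - i) + i =
        ∑ r ∈ Finset.Icc 1 i, ∑ j ∈ Finset.Icc r (n - 1), lam (n - j) := by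
  obtain ⟨c, hc⟩ := hle
  rw [sum_Icc_reflect n fun j p => (lam j : ℚ) • varpi n p] at hne hc hm
  rw [sum_Icc_reflect n fun i j => (m i : ℚ) • alphaC n j] at hm
  have hsize := sum_mul_eq_of_ne_zero_of_le_nsmul_varpi_one _ c hne hc
  intro i hi₁ hi
  have hcoeff := coeff_eq_of_sum_smul_varpi_eq hm hi₁ (by omega)
  have hn₀ : (n : ℚ) ≠ 0 := by norm_cast; omega
  rw [hsize, mul_div_cancel_right₀ _ hn₀, eq_sub_iff_add_eq] at hcoeff
  rw [sum_Icc_sum_Icc_eq_sum_min_smul]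
  exact_mod_cast hcoeff

/-- Let `λ = ∑_j λ_j ϖ_{j*} = ∑_i m_i α_{i*}` be a dominant coweight of `SL_n` with
`0 < λ ≤ n ϖ_1`, let `v = 1^{λ_{n-1}} ⋯ (n-1)^{λ_1}` be the associated partition of
`n`, and let `u = vᵀ` be the conjugate partition, so `u_r = ∑_{j ≥ r} λ_{n-j}`.
Then for `1 ≤ i ≤ n-1` one has `m_{n-i} = u_1 + ⋯ + u_i - i`. -/
theorem m_eq_conjugate_partial_sums (n : ℕ) (hn : 2 ≤ n) (lam m : ℕ → ℕ)
    (hne : (∑ j ∈ Finset.Icc 1 (n - 1), (lam j : ℚ) • varpi n (n - j)) ≠ 0)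
    (hle : ∃ c : ℕ → ℕ,
      (n : ℚ) • varpi n 1 - ∑ j ∈ Finset.Icc 1 (n - 1), (lam j : ℚ) • varpi n (n - j) =
        ∑ j ∈ Finset.Icc 1 (n - 1), (c j : ℚ) • alphaC n j)
    (hm : (∑ j ∈ Finset.Icc 1 (n - 1), (lam j : ℚ) • varpi n (n - j)) =
        ∑ i ∈ Finset.Icc 1 (n - 1), (m i : ℚ) • alphaC n (n - i)) :
    ∀ i, 1 ≤ i → i ≤ n - 1 →
      m (n - i) + i =
        ∑ r ∈ Finset.Icc 1 i, ∑ j ∈ Finset.Icc r (n - 1), lam (n - j) :=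
  m_eq_conjugate_partial_sums_general n lam m hne hle hm
end

section
/- Let λ be a dominant coweight of SL_n with λ = Σ m_i α_{i*} (m_i ≥ 0 integers) and let k be a positive integer. Then λ ≤ k·n·ϖ_1 if and only if k ≥ m_1. In particular k = m_1 is the minimal integer with λ ≤ k n ϖ_1. -/
theorem sum_Icc_smul_reflect {R M : Type*} [AddCommMonoid M] [SMul R M] (n : ℕ) (g : ℕ → R)
    (v : ℕ → M) :
    ∑ i ∈ Finset.Icc 1 (n - 1), g i • v (n - i) = ∑ j ∈ Finset.Icc 1 (n - 1), g (n - j) • v j := by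
  refine Finset.sum_nbij' (n - ·) (n - ·) ?_ ?_ ?_ ?_ ?_ <;> intro i hi <;>
    simp only [Finset.mem_Icc] at hi ⊢ <;> grind

theorem sum_smul_alphaC_apply (n : ℕ) (g : ℕ → ℚ) (x : Fin n) :
    (∑ j ∈ Finset.Icc 1 (n - 1), g j • alphaC n j) x =
      (Set.Icc 1 (n - 1)).indicator g (x + 1) - (Set.Icc 1 (n - 1)).indicator g x := by
  have hshift : ∀ j ∈ Finset.Icc 1 (n - 1), ((x : ℕ) = j - 1 ↔ x + 1 = j) := by
    intro j hj
    rw [Finset.mem_Icc] at hj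
    omega
  simp only [Finset.sum_apply, Pi.smul_apply, alphaC, smul_eq_mul, mul_sub,
    Finset.sum_sub_distrib, mul_ite, mul_one, mul_zero]
  rw [Finset.sum_congr rfl fun j hj => if_congr (hshift j hj) rfl rfl, Finset.sum_ite_eq,
    Finset.sum_ite_eq]
  simp [Set.indicator_apply]

theorem sum_smul_alphaC_apply_last {n : ℕ} (hn : 2 ≤ n) (g : ℕ → ℚ) :
    (∑ j ∈ Finset.Icc 1 (n - 1), g j • alphaC n j) ⟨n - 1, by omega⟩ = -g (n - 1) := by
  rw [sum_smul_alphaC_apply, Set.indicator_of_notMem, Set.indicator_of_mem, zero_sub] <;>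
    simp only [Set.mem_Icc] <;> omega

theorem natCast_smul_varpi_one (n : ℕ) :
    (n : ℚ) • varpi n 1 = ∑ i ∈ Finset.Icc 1 (n - 1), (i : ℚ) • alphaC n (n - i) := by
  ext ⟨x, hx⟩
  rw [Pi.smul_apply, sum_Icc_smul_reflect, sum_smul_alphaC_apply]
  obtain ⟨y, rfl⟩ : ∃ y, n = x + 1 + y := ⟨n - (x + 1), by omega⟩
  simp only [varpi, Set.indicator_apply, Set.mem_Icc, smul_eq_mul, Nat.add_sub_cancel_left,
    show x + 1 + y - x = y + 1 by omega]
  rcases x with _ | x <;> rcases y with _ | y <;> split_ifs <;> (try omega) <;> push_cast <;>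
    field_simp <;> ring

theorem nsmul_le_sub_of_le_sub {α : Type*} [AddCommGroup α] [PartialOrder α]
    [IsOrderedAddMonoid α] {f : ℕ → α} {a : α} {m n : ℕ} (hmn : m ≤ n)
    (h : ∀ t ∈ Finset.Ico m n, a ≤ f (t + 1) - f t) : (n - m) • a ≤ f n - f m := by
  simpa [Finset.sum_Ico_sub _ hmn] using Finset.card_nsmul_le_sum _ _ _ h

theorem le_mul_of_antitone_sum_smul_alphaC {n : ℕ} (hn : 2 ≤ n) (g : ℕ → ℚ)
    (hdom : Antitone (∑ i ∈ Finset.Icc 1 (n - 1), g i • alphaC n (n - i)))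
    {i : ℕ} (hi : i ∈ Finset.Icc 1 (n - 1)) : g i ≤ i * g 1 := by
  rw [sum_Icc_smul_reflect] at hdom
  set G := (Set.Icc 1 (n - 1)).indicator fun j => g (n - j)
  rw [Finset.mem_Icc] at hi
  have hslope : ∀ t ∈ Finset.Ico (n - i) n, G n - G (n - 1) ≤ G (t + 1) - G t := by
    intro t ht
    rw [Finset.mem_Ico] at ht
    have hle := hdom (show (⟨t, ht.2⟩ : Fin n) ≤ ⟨n - 1, by omega⟩ from Fin.mk_le_mk.2 (by omega))
    rwa [sum_smul_alphaC_apply, sum_smul_alphaC_apply, Nat.sub_add_cancel (by omega)] at hle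
  have htele := nsmul_le_sub_of_le_sub (by omega) hslope
  simp only [G, Set.indicator_apply, Set.mem_Icc] at htele
  rw [if_neg (by omega), if_pos (by omega), if_pos (by omega), Nat.sub_sub_self (by omega),
    Nat.sub_sub_self (by omega), nsmul_eq_mul] at htele
  linarith

theorem le_kn_varpi_one_iff_general (n k : ℕ) (hn : 2 ≤ n) (m : ℕ → ℕ)
    (hdom : ∀ a b : Fin n, a ≤ b →
      (∑ i ∈ Finset.Icc 1 (n - 1), (m i : ℚ) • alphaC n (n - i)) b ≤
      (∑ i ∈ Finset.Icc 1 (n - 1), (m i : ℚ) • alphaC n (n - i)) a) :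
    (∃ c : ℕ → ℕ,
      ((k * n : ℕ) : ℚ) • varpi n 1 -
          ∑ i ∈ Finset.Icc 1 (n - 1), (m i : ℚ) • alphaC n (n - i) =
        ∑ j ∈ Finset.Icc 1 (n - 1), (c j : ℚ) • alphaC n j) ↔ m 1 ≤ k := by
  have hdiff : ((k * n : ℕ) : ℚ) • varpi n 1 -
      ∑ i ∈ Finset.Icc 1 (n - 1), (m i : ℚ) • alphaC n (n - i) =
        ∑ j ∈ Finset.Icc 1 (n - 1), (((k * (n - j) : ℕ) : ℚ) - m (n - j)) • alphaC n j := by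
    rw [Nat.cast_mul, mul_smul, natCast_smul_varpi_one, Finset.smul_sum, ← Finset.sum_sub_distrib]
    simp only [smul_smul, ← sub_smul]
    rw [sum_Icc_smul_reflect]
    push_cast
    rfl
  rw [hdiff]
  constructor
  · rintro ⟨c, hc⟩
    have hlast := congrFun hc ⟨n - 1, by omega⟩
    rw [sum_smul_alphaC_apply_last hn, sum_smul_alphaC_apply_last hn,
      Nat.sub_sub_self (by omega)] at hlast
    push_cast at hlast
    exact_mod_cast (by linarith [(c (n - 1)).cast_nonneg (α := ℚ)] : (m 1 : ℚ) ≤ k)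
  · intro hk
    refine ⟨fun j => k * (n - j) - m (n - j), Finset.sum_congr rfl fun j hj => ?_⟩
    have hbound : m (n - j) ≤ k * (n - j) :=
      calc m (n - j) ≤ (n - j) * m 1 := by
            exact_mod_cast le_mul_of_antitone_sum_smul_alphaC hn (fun i => (m i : ℚ)) hdom
              (i := n - j) (by simp only [Finset.mem_Icc] at hj ⊢; omega)
        _ ≤ k * (n - j) := by rw [mul_comm]; gcongr
    rw [Nat.cast_sub hbound]

/-- For a dominant coweight `λ = ∑_i m_i α_{i*}` of `SL_n` (`m_i ≥ 0`) and a
positive integer `k`, one has `λ ≤ k n ϖ_1` if and only if `k ≥ m_1`. -/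
theorem le_kn_varpi_one_iff (n k : ℕ) (hn : 2 ≤ n) (hk : 1 ≤ k) (m : ℕ → ℕ)
    (hdom : ∀ a b : Fin n, a ≤ b →
      (∑ i ∈ Finset.Icc 1 (n - 1), (m i : ℚ) • alphaC n (n - i)) b ≤
      (∑ i ∈ Finset.Icc 1 (n - 1), (m i : ℚ) • alphaC n (n - i)) a) :
    (∃ c : ℕ → ℕ,
      ((k * n : ℕ) : ℚ) • varpi n 1 -
          ∑ i ∈ Finset.Icc 1 (n - 1), (m i : ℚ) • alphaC n (n - i) =
        ∑ j ∈ Finset.Icc 1 (n - 1), (c j : ℚ) • alphaC n j) ↔ m 1 ≤ k :=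
  le_kn_varpi_one_iff_general n k hn m hdom
end
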